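/- Under the assumption that for every sample s the values Y s, Xa s, Xd s are pairwise distinct, the DFT warm spare gate WSP Y Xa Xd equals the DRBD spare construct R_WSP Y Xa Xd. -/

import Mathlib

noncomputable def D_BEFORE {α : Type*} (A B : α → EReal) : α → EReal :=
  fun s => if A s < B s then A s else ⊤
noncomputable def D_SIMULT {α : Type*} (A B : α → EReal) : α → EReal :=
  fun s => if A s = B s then A s else ⊤
noncomputable def R_AFTER {α : Type*} (X Y : α → EReal) : α → EReal :=
  fun s => if Y s < X s then X s else ⊤

noncomputable def WSP {α : Type*} (Y Xa Xd : α → EReal) : α → EReal :=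
  fun s => min (min (max (Y s) (D_BEFORE Xd Y s)) (max (Xa s) (D_BEFORE Y Xa s)))
    (min (D_SIMULT Y Xa s) (D_SIMULT Y Xd s))

noncomputable def R_WSP {α : Type*} (Y Xa Xd : α → EReal) : α → EReal :=
  fun s => min (R_AFTER Xa Y s) (R_AFTER Y Xd s)


theorem max_ite_lt_top {β : Type*} [LinearOrder β] [OrderTop β] (a b : β) :
    max b (if a < b then a else ⊤) = if a < b then b else ⊤ := by
  split_ifs with hab
  · exact max_eq_left hab.le
  · exact max_top_right b

section Gates

variable {α : Type*}

theorem max_D_BEFORE_eq_R_AFTER (A B : α → EReal) (s : α) :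
    max (B s) (D_BEFORE A B s) = R_AFTER B A s :=
  max_ite_lt_top (A s) (B s)

theorem D_SIMULT_apply_of_ne {A B : α → EReal} {s : α} (h : A s ≠ B s) :
    D_SIMULT A B s = ⊤ :=
  if_neg h

end Gates

theorem wsp_eq_r_wsp {α : Type*} (Y Xa Xd : α → EReal)
    (h : ∀ s, List.Pairwise (· ≠ ·) [Y s, Xa s, Xd s]) :
    WSP Y Xa Xd = R_WSP Y Xa Xd := by
  funext s
  obtain ⟨⟨hya, hyd⟩, -⟩ := by simpa using h s
  simp only [WSP, R_WSP, max_D_BEFORE_eq_R_AFTER, D_SIMULT_apply_of_ne hya,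
    D_SIMULT_apply_of_ne hyd, min_self, min_top_right]
  exact min_comm _ _
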